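/- If a graph G on [n] is 12-representable by a word avoiding both patterns 211 and 221, then after relabeling the isolated vertices of G with the largest labels, G is 12-representable by a permutation; consequently G is a permutation graph. -/

import Mathlib

/-- Every occurrence of `j` precedes every occurrence of `i` in the word `w`. -/
def EveryBefore (w : List ℕ) (j i : ℕ) : Prop :=
  ∀ p q : Fin w.length, w.get p = j → w.get q = i → p < q

/-- The word `w` 12-represents the graph `G` on the vertex set `{1, …, n}`:
`w` uses only letters from `{1, …, n}`, contains each of them at least once, and
for `i < j` in `{1, …, n}`, `i` and `j` are adjacent iff every `j` occurs before every `i`. -/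
def Represents12 (n : ℕ) (G : SimpleGraph ℕ) (w : List ℕ) : Prop :=
  (∀ x ∈ w, 1 ≤ x ∧ x ≤ n) ∧
  (∀ i, 1 ≤ i → i ≤ n → i ∈ w) ∧
  (∀ i j, 1 ≤ i → i < j → j ≤ n → (G.Adj i j ↔ EveryBefore w j i))

/-- `w` is a permutation of `{1, …, n}`, i.e. each letter occurs exactly once. -/
def IsPermWord (n : ℕ) (w : List ℕ) : Prop :=
  w.Perm (List.range' 1 n)

/-- `w` avoids the pattern 211: no subsequence b, a, a with a < b. -/
def Avoids211 (w : List ℕ) : Prop :=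
  ¬ ∃ p q r : Fin w.length, p < q ∧ q < r ∧ w.get q = w.get r ∧ w.get r < w.get p

/-- `w` avoids the pattern 221: no subsequence b, b, a with a < b. -/
def Avoids221 (w : List ℕ) : Prop :=
  ¬ ∃ p q r : Fin w.length, p < q ∧ q < r ∧ w.get p = w.get q ∧ w.get r < w.get p

/-- `v` is an isolated vertex of `G` restricted to `{1, …, n}`. -/
def IsolatedIn (n : ℕ) (G : SimpleGraph ℕ) (v : ℕ) : Prop :=
  ∀ u, 1 ≤ u → u ≤ n → ¬ G.Adj v u


/-!
A letter occurring twice in a word avoiding 211 and 221 is an isolated vertex: a smaller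
neighbour would have to follow both copies (pattern 221) and a larger one precede both
(pattern 211). So deleting the isolated letters leaves a word without repeated letters, and it
still represents the graph on the non-isolated vertices, because adjacency of `i < j` only asks
whether some `i` precedes some `j`. Relabelling the non-isolated vertices `1, …, k` in increasing
order turns this word into a permutation of `1, …, k`; appending `k + 1, …, n` in increasing order
for the isolated vertices makes them adjacent to nothing.
-/

open List Equiv Function

namespace List

variable {α β : Type*}

lemma sublist_filter_iff_of_forall {l w : List α} {p : α → Bool} (hl : ∀ x ∈ l, p x) :
    l <+ w.filter p ↔ l <+ w :=
  ⟨fun h => h.trans filter_sublist, fun h => filter_eq_self.2 hl ▸ h.filter p⟩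

lemma map_sublist_map_iff {f : α → β} (hf : Injective f) {l l' : List α} :
    l.map f <+ l'.map f ↔ l <+ l' := by
  refine ⟨fun h => ?_, fun h => h.map f⟩
  obtain ⟨l'', hs, he⟩ := sublist_map_iff.1 h
  rwa [map_injective_iff.2 hf he]

lemma sublist_append_iff_of_forall_notMem {l A B : List α} (hl : ∀ x ∈ l, x ∉ B) :
    l <+ A ++ B ↔ l <+ A := by
  refine ⟨fun h => ?_, fun h => h.trans (sublist_append_left A B)⟩
  obtain ⟨l₁, l₂, rfl, h₁, h₂⟩ := sublist_append_iff.1 h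
  obtain rfl : l₂ = [] :=
    eq_nil_iff_forall_not_mem.2 fun x hx => hl x (mem_append_right _ hx) (h₂.subset hx)
  simpa using h₁

end List

lemma everyBefore_iff_not_pair_sublist {w : List ℕ} {i j : ℕ} (hij : i ≠ j) :
    EveryBefore w j i ↔ ¬ [i, j] <+ w := by
  have hpw : EveryBefore w j i ↔ w.Pairwise (fun x y => ¬ (x = i ∧ y = j)) := by
    rw [pairwise_iff_get]
    constructor
    · rintro h p q hpq ⟨hp, hq⟩
      exact lt_asymm hpq (h q p hq hp)
    · intro h p q hp hq
      by_contra hle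
      rcases (not_lt.1 hle).lt_or_eq with hlt | rfl
      · exact h q p hlt ⟨hq, hp⟩
      · exact hij (hq.symm.trans hp)
  rw [hpw, pairwise_iff_forall_sublist]
  exact ⟨fun h hs => h hs ⟨rfl, rfl⟩, fun h a b hs hab => h (hab.1 ▸ hab.2 ▸ hs)⟩

lemma exists_perm_apply_succ_eq_getElem {n : ℕ} {L : List ℕ} (hL : L ~ range' 1 n) :
    ∃ σ : Perm ℕ, (∀ t (ht : t < L.length), σ (t + 1) = L[t]) ∧
      ∀ x, x ∉ range' 1 n → σ x = x := by
  classical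
  let f : ℕ → ℕ := fun x => L.getD (x - 1) 0
  have hf : ∀ x ∈ range' 1 n, ∃ h : x - 1 < L.length, f x = L[x - 1] := fun x hx => by
    have hlen : L.length = n := by simpa using hL.length_eq
    rw [mem_range'_1] at hx
    exact ⟨by omega, getD_eq_getElem _ _ _⟩
  have hmaps : Set.MapsTo f {x | x ∈ range' 1 n} {x | x ∈ range' 1 n} := fun x hx => by
    obtain ⟨h, hfx⟩ := hf x hx
    exact hfx ▸ hL.subset (getElem_mem h)
  have hinj : Set.InjOn f {x | x ∈ range' 1 n} := fun x hx y hy hxy => by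
    obtain ⟨h, hfx⟩ := hf x hx
    obtain ⟨h', hfy⟩ := hf y hy
    rw [hfx, hfy, (hL.nodup_iff.2 nodup_range').getElem_inj_iff] at hxy
    simp only [Set.mem_ofPred_eq, mem_range'_1] at hx hy
    omega
  have hbij := ((range' 1 n).finite_toSet.injOn_iff_bijOn_of_mapsTo hmaps).1 hinj
  refine ⟨Perm.ofSubtype (hbij.equiv f), fun t ht => ?_,
    fun x hx => Perm.ofSubtype_apply_of_not_mem _ hx⟩
  have hlen : L.length = n := by simpa using hL.length_eq
  rw [Perm.ofSubtype_apply_of_mem _ (mem_range'_1.2 (by omega))]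
  exact getD_eq_getElem _ _ _

lemma exists_perm_stablePartition (n : ℕ) (P : ℕ → Prop) [DecidablePred P] :
    ∃ σ : Perm ℕ, ∃ k ≤ n, (∀ x, 1 ≤ σ x ∧ σ x ≤ n ↔ 1 ≤ x ∧ x ≤ n) ∧
      (∀ i, 1 ≤ i → i ≤ n → (P (σ i) ↔ i ≤ k)) ∧ StrictMonoOn σ (Set.Icc 1 k) := by
  set A := (range' 1 n).filter (fun x => P x)
  set B := (range' 1 n).filter (fun x => ¬ P x)
  have hAB : A ++ B ~ range' 1 n := by
    simpa [A, B] using filter_append_perm (fun x => P x) (range' 1 n)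
  obtain ⟨σ, hσL, hσfix⟩ := exists_perm_apply_succ_eq_getElem hAB
  have hlen : A.length + B.length = n := by simpa using hAB.length_eq
  have hσA : ∀ t (ht : t < A.length), σ (t + 1) = A[t] := fun t ht =>
    (hσL t (by rw [length_append]; omega)).trans (getElem_append_left ht)
  have hσB : ∀ t, A.length ≤ t → t < n → σ (t + 1) ∈ B := fun t ht htn => by
    rw [hσL t (by rw [length_append]; omega), getElem_append_right ht]
    exact getElem_mem _
  refine ⟨σ, A.length, by omega, fun x => ?_, fun i hi hin => ?_, fun i hi j hj hij => ?_⟩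
  · by_cases hx : x ∈ range' 1 n
    · obtain ⟨t, ht, rfl⟩ : ∃ t < n, x = t + 1 := ⟨x - 1, by rw [mem_range'_1] at hx; omega⟩
      have ht' : t < (A ++ B).length := by rw [length_append]; omega
      have := mem_range'_1.1 (hAB.subset (getElem_mem ht'))
      rw [hσL t ht']
      omega
    · rw [hσfix x hx]
  · obtain ⟨t, rfl⟩ : ∃ t, i = t + 1 := ⟨i - 1, by omega⟩
    rcases lt_or_ge t A.length with ht | ht
    · have := hσA t ht ▸ getElem_mem ht
      simp only [A, mem_filter, decide_eq_true_eq] at this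
      exact iff_of_true this.2 (by omega)
    · have := hσB t ht (by omega)
      simp only [B, mem_filter, decide_eq_true_eq] at this
      exact iff_of_false this.2 (by omega)
  · simp only [Set.mem_Icc] at hi hj
    obtain ⟨s, rfl⟩ : ∃ s, i = s + 1 := ⟨i - 1, by omega⟩
    obtain ⟨t, rfl⟩ : ∃ t, j = t + 1 := ⟨j - 1, by omega⟩
    rw [hσA s (by omega), hσA t (by omega)]
    exact pairwise_iff_getElem.1 (Pairwise.filter _ pairwise_lt_range') s t _ _ (by omega)

lemma isolatedIn_of_get_eq {n : ℕ} {G : SimpleGraph ℕ} {w : List ℕ} (h211 : Avoids211 w)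
    (h221 : Avoids221 w) (hw : Represents12 n G w) {p q : Fin w.length} (hpq : p < q)
    (he : w.get p = w.get q) : IsolatedIn n G (w.get p) := by
  obtain ⟨hbound, hmem, hadj⟩ := hw
  intro u hu hun hvu
  obtain ⟨hv, hvn⟩ := hbound _ (w.get_mem p)
  obtain ⟨r, hr⟩ := get_of_mem (hmem u hu hun)
  rcases lt_trichotomy u (w.get p) with hlt | rfl | hgt
  · have hqr : q < r := (hadj u _ hu hlt hvn).1 hvu.symm q r he.symm hr
    exact h221 ⟨p, q, r, hpq, hqr, he, hr ▸ hlt⟩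
  · exact G.irrefl hvu
  · have hrp : r < p := (hadj _ u hv hgt hun).1 hvu r p hr rfl
    exact h211 ⟨r, p, q, hrp, hpq, he, he ▸ hr ▸ hgt⟩

lemma nodup_filter_not_isolatedIn {n : ℕ} {G : SimpleGraph ℕ} [DecidablePred (IsolatedIn n G)]
    {w : List ℕ} (h211 : Avoids211 w) (h221 : Avoids221 w) (hw : Represents12 n G w) :
    (w.filter (fun v => ¬ IsolatedIn n G v)).Nodup := by
  refine nodup_iff_sublist.2 fun v hv => ?_
  have hiso : ¬ IsolatedIn n G v := by
    simpa using (mem_filter.1 (hv.subset mem_cons_self)).2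
  obtain ⟨f, hf⟩ := sublist_iff_exists_fin_orderEmbedding_get_eq.1 (hv.trans filter_sublist)
  have h0 : w.get (f 0) = v := (hf 0).symm
  exact hiso (h0 ▸ isolatedIn_of_get_eq h211 h221 hw (f.strictMono (by simp))
    (h0.trans (hf 1)))

/-- `σ` sends labels (the letters of the result) to vertices (the letters of `w`). -/
def relabelWord (n k : ℕ) (P : ℕ → Prop) [DecidablePred P] (σ : Perm ℕ) (w : List ℕ) :
    List ℕ :=
  (w.filter (fun x => P x)).map σ.symm ++ range' (k + 1) (n - k)

section RelabelWord

variable {n k : ℕ} {P : ℕ → Prop} [DecidablePred P] {σ : Perm ℕ} {w : List ℕ}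

lemma mem_map_symm_filter_iff (hw : ∀ x, x ∈ w ↔ 1 ≤ x ∧ x ≤ n)
    (hσ : ∀ x, 1 ≤ σ x ∧ σ x ≤ n ↔ 1 ≤ x ∧ x ≤ n)
    (hσP : ∀ i, 1 ≤ i → i ≤ n → (P (σ i) ↔ i ≤ k)) (hk : k ≤ n) {x : ℕ} :
    x ∈ (w.filter (fun x => P x)).map σ.symm ↔ 1 ≤ x ∧ x ≤ k := by
  rw [← σ.symm_apply_apply x, mem_map_of_injective σ.symm.injective, σ.symm_apply_apply,
    mem_filter, hw, hσ, decide_eq_true_eq]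
  constructor
  · rintro ⟨⟨h1, hn⟩, hP⟩
    exact ⟨h1, (hσP x h1 hn).1 hP⟩
  · rintro ⟨h1, hxk⟩
    exact ⟨⟨h1, hxk.trans hk⟩, (hσP x h1 (hxk.trans hk)).2 hxk⟩

lemma isPermWord_relabelWord (hw : ∀ x, x ∈ w ↔ 1 ≤ x ∧ x ≤ n)
    (hσ : ∀ x, 1 ≤ σ x ∧ σ x ≤ n ↔ 1 ≤ x ∧ x ≤ n)
    (hσP : ∀ i, 1 ≤ i → i ≤ n → (P (σ i) ↔ i ≤ k)) (hk : k ≤ n)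
    (hnd : (w.filter (fun x => P x)).Nodup) :
    IsPermWord n (relabelWord n k P σ w) := by
  have hA : (w.filter (fun x => P x)).map σ.symm ~ range' 1 k :=
    (perm_ext_iff_of_nodup (hnd.map σ.symm.injective) nodup_range').2 fun x => by
      rw [mem_map_symm_filter_iff hw hσ hσP hk, mem_range'_1]
      omega
  have hsplit : range' 1 k ++ range' (k + 1) (n - k) = range' 1 n := by
    rw [show k + 1 = 1 + 1 * k by omega, range'_append, show k + (n - k) = n by omega]
  rw [IsPermWord, relabelWord, ← hsplit]
  exact hA.append_right _

lemma everyBefore_relabelWord_iff (hσP : ∀ i, 1 ≤ i → i ≤ n → (P (σ i) ↔ i ≤ k))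
    (hk : k ≤ n) {i j : ℕ} (hi : 1 ≤ i) (hij : i < j) (hjk : j ≤ k) :
    EveryBefore (relabelWord n k P σ w) j i ↔ EveryBefore w (σ j) (σ i) := by
  have hPi := (hσP i hi (by omega)).2 (by omega)
  have hPj := (hσP j (by omega) (by omega)).2 hjk
  rw [everyBefore_iff_not_pair_sublist hij.ne,
    everyBefore_iff_not_pair_sublist (σ.injective.ne hij.ne), relabelWord,
    sublist_append_iff_of_forall_notMem (by simp [mem_range'_1]; omega), not_iff_not]
  calc [i, j] <+ (w.filter (fun x => P x)).map σ.symm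
      ↔ [σ i, σ j].map σ.symm <+ (w.filter (fun x => P x)).map σ.symm := by simp
    _ ↔ [σ i, σ j] <+ w.filter (fun x => P x) := map_sublist_map_iff σ.symm.injective
    _ ↔ [σ i, σ j] <+ w := sublist_filter_iff_of_forall (by simp [hPi, hPj])

lemma not_everyBefore_relabelWord (hw : ∀ x, x ∈ w ↔ 1 ≤ x ∧ x ≤ n)
    (hσ : ∀ x, 1 ≤ σ x ∧ σ x ≤ n ↔ 1 ≤ x ∧ x ≤ n)
    (hσP : ∀ i, 1 ≤ i → i ≤ n → (P (σ i) ↔ i ≤ k)) (hk : k ≤ n)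
    {i j : ℕ} (hi : 1 ≤ i) (hij : i < j) (hkj : k < j) (hjn : j ≤ n) :
    ¬ EveryBefore (relabelWord n k P σ w) j i := by
  rw [everyBefore_iff_not_pair_sublist hij.ne, not_not, relabelWord]
  have hj : j ∈ range' (k + 1) (n - k) := mem_range'_1.2 (by omega)
  rcases le_or_gt i k with hik | hki
  · have hi' : i ∈ (w.filter (fun x => P x)).map σ.symm :=
      (mem_map_symm_filter_iff hw hσ hσP hk).2 ⟨hi, hik⟩
    exact (singleton_sublist.2 hi').append (singleton_sublist.2 hj)
  · have hi' : i ∈ range' (k + 1) (n - k) := mem_range'_1.2 (by omega)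
    refine sublist_append_of_sublist_right
      (sublist_of_subperm_of_pairwise ?_ ?_ pairwise_lt_range')
    · exact Nodup.subperm (by simpa using hij.ne) (by simp [hi', hj])
    · simpa using hij

end RelabelWord

theorem stmt_19 (n : ℕ) (G : SimpleGraph ℕ)
    (h : ∃ w, Avoids211 w ∧ Avoids221 w ∧ Represents12 n G w) :
    ∃ σ : Equiv.Perm ℕ,
      (∀ x, 1 ≤ x → x ≤ n → 1 ≤ σ x ∧ σ x ≤ n) ∧
      (∀ i j, 1 ≤ i → i ≤ n → 1 ≤ j → j ≤ n →
        IsolatedIn n G (σ i) → ¬ IsolatedIn n G (σ j) → j < i) ∧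
      ∃ π, IsPermWord n π ∧
        (∀ i j, 1 ≤ i → i < j → j ≤ n → (G.Adj (σ i) (σ j) ↔ EveryBefore π j i)) := by
  classical
  obtain ⟨w, h211, h221, hw⟩ := h
  have hmem : ∀ x, x ∈ w ↔ 1 ≤ x ∧ x ≤ n := fun x => ⟨hw.1 x, fun hx => hw.2.1 x hx.1 hx.2⟩
  obtain ⟨σ, k, hk, hσ, hσP, hmono⟩ :=
    exists_perm_stablePartition n (fun v => ¬ IsolatedIn n G v)
  have hσi : ∀ i, 1 ≤ i → i ≤ n → 1 ≤ σ i ∧ σ i ≤ n := fun i hi hin => (hσ i).2 ⟨hi, hin⟩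
  refine ⟨σ, hσi, fun i j hi hin hj hjn hiso hniso => ?_,
    relabelWord n k (fun v => ¬ IsolatedIn n G v) σ w,
    isPermWord_relabelWord hmem hσ hσP hk (nodup_filter_not_isolatedIn h211 h221 hw),
    fun i j hi hij hjn => ?_⟩
  · have hki : ¬ i ≤ k := fun hik => (hσP i hi hin).2 hik hiso
    have hjk : j ≤ k := (hσP j hj hjn).1 hniso
    omega
  rcases le_or_gt j k with hjk | hkj
  · rw [everyBefore_relabelWord_iff hσP hk hi hij hjk]
    exact hw.2.2 _ _ (hσi i hi (by omega)).1 (hmono ⟨hi, by omega⟩ ⟨by omega, hjk⟩ hij)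
      (hσi j (by omega) hjn).2
  · have hiso : IsolatedIn n G (σ j) :=
      not_not.1 fun hj => hkj.not_ge ((hσP j (by omega) hjn).1 hj)
    refine iff_of_false (fun hadj => ?_)
      (not_everyBefore_relabelWord hmem hσ hσP hk hi hij hkj hjn)
    exact hiso (σ i) (hσi i hi (by omega)).1 (hσi i hi (by omega)).2 hadj.symm
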